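/- Let A be a summand-ideal of the pseudo MV-algebra M = Γ(G,u), so that M = A ⊞ B for some normal ideal B of M. Then M = A ⊕ B and B = A^⊥. -/

import Mathlib

variable {G : Type*} [Lattice G] [AddGroup G]
  [CovariantClass G G (· + ·) (· ≤ ·)]
  [CovariantClass G G (Function.swap (· + ·)) (· ≤ ·)]

/-- `u` is a strong unit of the lattice-ordered group `G`. -/
def IsStrongUnit (u : G) : Prop := 0 ≤ u ∧ ∀ x : G, ∃ n : ℕ, x ≤ n • u

/-- The operation `x ⊕ y := (x + y) ⊓ u` of the pseudo MV-algebra `Γ(G,u)`. -/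
def oplus (u x y : G) : G := (x + y) ⊓ u

/-- The operation `x ⊙ y := (x - u + y) ⊔ 0` of the pseudo MV-algebra `Γ(G,u)`. -/
def odot (u x y : G) : G := (x - u + y) ⊔ 0

/-- `n.x := x ⊕ ⋯ ⊕ x` (`n` summands), with `0.x = 0`. -/
def nOplus (u : G) : ℕ → G → G
  | 0, _ => 0
  | n + 1, x => oplus u (nOplus u n x) x

/-- `I` is an ideal of the pseudo MV-algebra with carrier `C ⊆ Γ(G,u)`:
a nonempty subset of `C`, downward closed within `C`, and closed under `⊕`. -/
def IsIdealIn (u : G) (C I : Set G) : Prop :=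
  I ⊆ C ∧ I.Nonempty ∧ (∀ x ∈ I, ∀ y ∈ C, y ≤ x → y ∈ I) ∧
    ∀ x ∈ I, ∀ y ∈ I, oplus u x y ∈ I

/-- `I` is a normal ideal: `x ⊕ I = I ⊕ x` for all `x ∈ C`. -/
def IsNormalIdealIn (u : G) (C I : Set G) : Prop :=
  IsIdealIn u C I ∧ ∀ x ∈ C, (fun i => oplus u x i) '' I = (fun i => oplus u i x) '' I

/-- `⟨X⟩_n`, the smallest normal ideal (of the carrier `C`) containing `X`. -/
def normalGenIn (u : G) (C X : Set G) : Set G :=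
  ⋂₀ {I | IsNormalIdealIn u C I ∧ X ⊆ I}

/-- The polar `X^⊥ = {y ∈ C : y ∧ x = 0 for all x ∈ X}` computed in carrier `C`. -/
def polarIn (C X : Set G) : Set G := {y ∈ C | ∀ x ∈ X, y ⊓ x = 0}

/-- `A ⊕ B := {a ⊕ b : a ∈ A, b ∈ B}`. -/
def setOplus (u : G) (A B : Set G) : Set G := Set.image2 (oplus u) A B

/-- `↓a` computed within the carrier `C`. -/
def dsetIn (C : Set G) (a : G) : Set G := {x ∈ C | x ≤ a}

/-- `I` is a summand-ideal of the carrier `C`: a normal ideal such that for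
some normal ideal `J`, `I ∩ J = {0}` and `⟨I ∪ J⟩_n = C`. -/
def IsSummandIdealIn (u : G) (C I : Set G) : Prop :=
  IsNormalIdealIn u C I ∧ ∃ J, IsNormalIdealIn u C J ∧ I ∩ J = {0} ∧
    normalGenIn u C (I ∪ J) = C

/-- `I` is a polar ideal of the carrier `C`: `I = I^⊥⊥`. -/
def IsPolarIdealIn (C I : Set G) : Prop := polarIn C (polarIn C I) = I

/-- `a` is a Boolean element of the carrier `C`: `a ∈ C` and `a ⊕ a = a`. -/
def IsBooleanIn (u : G) (C : Set G) (a : G) : Prop := a ∈ C ∧ oplus u a a = a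

/-- The carrier `C` is strongly projectable: every polar ideal is a summand-ideal. -/
def IsStronglyProjectableIn (u : G) (C : Set G) : Prop :=
  ∀ I : Set G, IsPolarIdealIn C I → IsSummandIdealIn u C I

/-- `N` is a subalgebra of `Γ(G,u)`: contains `0` and `u`, closed under `⊕`,
`x⁻ = u - x` and `x∼ = -x + u`. -/
def IsSubalg (u : G) (N : Set G) : Prop :=
  N ⊆ Set.Icc 0 u ∧ 0 ∈ N ∧ u ∈ N ∧
    (∀ x ∈ N, ∀ y ∈ N, oplus u x y ∈ N) ∧
    (∀ x ∈ N, u - x ∈ N) ∧ (∀ x ∈ N, -x + u ∈ N)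

/-- `N` is a large subalgebra of `Γ(G,u)`: for every nonzero `y ∈ Γ(G,u)` there
are `n ∈ ℕ` and a nonzero `x ∈ N` with `x ≤ n.y`. -/
def IsLargeSubalg (u : G) (N : Set G) : Prop :=
  IsSubalg u N ∧ ∀ y ∈ Set.Icc (0 : G) u, y ≠ 0 →
    ∃ n : ℕ, ∃ x ∈ N, x ≠ 0 ∧ x ≤ nOplus u n y

/-!
Elements of `A` and `B` are disjoint, and disjoint elements of an ℓ-group commute; hence
`(a ⊕ b) ⊕ (a' ⊕ b') ≤ (a ⊕ a') ⊕ (b ⊕ b')`. Together with the Riesz decomposition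
`y = (y ∧ a) ⊕ (-(y ∧ a) + y)` of any `y ≤ a ⊕ b`, this makes `A ⊕ B` a normal ideal. It contains
`A ∪ B`, so it is all of `Γ(G,u)`. Finally, writing `y ∈ A^⊥` as `a ⊕ b` gives `a ≤ y`, so
`a = y ∧ a = 0` and `y = b ∈ B`.
-/

section LatticeOrderedGroup

variable {α : Type*} [Lattice α] [AddGroup α]

section Oplus

variable {u : α}

theorem oplus_zero {x : α} (hx : x ≤ u) : oplus u x 0 = x := by
  rw [oplus, add_zero, inf_eq_left.2 hx]

theorem zero_oplus {x : α} (hx : x ≤ u) : oplus u 0 x = x := by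
  rw [oplus, zero_add, inf_eq_left.2 hx]

theorem oplus_inf_neg_inf_add {y : α} (a : α) (hy : y ≤ u) :
    oplus u (y ⊓ a) (-(y ⊓ a) + y) = y := by
  rw [oplus, add_neg_cancel_left, inf_eq_left.2 hy]

theorem oplus_mem_Icc [AddLeftMono α] {x y : α} (hx : 0 ≤ x) (hy : 0 ≤ y) (hu : 0 ≤ u) :
    oplus u x y ∈ Set.Icc 0 u :=
  ⟨le_inf (add_nonneg hx hy) hu, inf_le_right⟩

theorem le_oplus_left [AddLeftMono α] {x y : α} (hx : x ≤ u) (hy : 0 ≤ y) :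
    x ≤ oplus u x y :=
  le_inf (le_add_of_nonneg_right hy) hx

end Oplus

section Mono

variable [AddLeftMono α] [AddRightMono α]

theorem add_eq_sup_of_inf_eq_zero {a b : α} (h : a ⊓ b = 0) : a + b = b ⊔ a := by
  have key : a + -(a ⊓ b) + b = b ⊔ a := by
    rw [neg_inf, add_sup, add_neg_cancel, sup_add, zero_add, add_assoc, neg_add_cancel, add_zero]
  simpa [h] using key

theorem add_comm_of_inf_eq_zero {a b : α} (h : a ⊓ b = 0) : a + b = b + a := by
  rw [add_eq_sup_of_inf_eq_zero h, add_eq_sup_of_inf_eq_zero (inf_comm b a ▸ h), sup_comm]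

theorem add_inf_le_inf_add_inf {x y u : α} (hx : 0 ≤ x) (hy : 0 ≤ y) (hu : 0 ≤ u) :
    (x + y) ⊓ u ≤ x ⊓ u + y ⊓ u := by
  rw [add_inf, inf_add]
  exact le_inf (le_inf inf_le_left (inf_le_right.trans (le_add_of_nonneg_right hy)))
    (inf_le_right.trans (le_add_of_nonneg_left (le_inf hx hu)))

theorem neg_inf_add_nonneg (y a : α) : 0 ≤ -(y ⊓ a) + y := by
  rw [neg_inf, sup_add, neg_add_cancel]
  exact le_sup_left

theorem neg_inf_add_le {y a b : α} (hb : 0 ≤ b) (h : y ≤ a + b) : -(y ⊓ a) + y ≤ b := by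
  rw [neg_inf, sup_add, neg_add_cancel]
  exact sup_le hb (by simpa using add_le_add_left h (-a))

theorem oplus_assoc {u x z : α} (y : α) (hx : 0 ≤ x) (hz : 0 ≤ z) :
    oplus u (oplus u x y) z = oplus u x (oplus u y z) := by
  simp only [oplus]
  rw [inf_add, add_inf, inf_assoc, inf_assoc, inf_eq_right.2 (le_add_of_nonneg_right hz),
    inf_eq_right.2 (le_add_of_nonneg_left hx), add_assoc]

theorem oplus_oplus_le_oplus_oplus {u a₁ b₁ a₂ b₂ : α} (ha₁ : 0 ≤ a₁) (hb₁ : 0 ≤ b₁)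
    (ha₂ : 0 ≤ a₂) (hb₂ : 0 ≤ b₂) (hu : 0 ≤ u) (hcomm : b₁ + a₂ = a₂ + b₁) :
    oplus u (oplus u a₁ b₁) (oplus u a₂ b₂) ≤ oplus u (oplus u a₁ a₂) (oplus u b₁ b₂) := by
  have hswap : a₁ + b₁ + (a₂ + b₂) = a₁ + a₂ + (b₁ + b₂) := by
    simp only [add_assoc, ← add_assoc b₁, hcomm]
  calc ((a₁ + b₁) ⊓ u + (a₂ + b₂) ⊓ u) ⊓ u
      ≤ (a₁ + a₂ + (b₁ + b₂)) ⊓ u :=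
        inf_le_inf_right u (hswap ▸ add_le_add inf_le_left inf_le_left)
    _ ≤ ((a₁ + a₂) ⊓ u + (b₁ + b₂) ⊓ u) ⊓ u :=
        le_inf (add_inf_le_inf_add_inf (add_nonneg ha₁ ha₂) (add_nonneg hb₁ hb₂) hu) inf_le_right

end Mono

section Ideals

variable {u : α} {I A B : Set α}

namespace IsIdealIn

theorem nonneg (hI : IsIdealIn u (Set.Icc 0 u) I) {x : α} (hx : x ∈ I) : 0 ≤ x :=
  (hI.1 hx).1

theorem le_unit (hI : IsIdealIn u (Set.Icc 0 u) I) {x : α} (hx : x ∈ I) : x ≤ u :=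
  (hI.1 hx).2

theorem mem_of_le (hI : IsIdealIn u (Set.Icc 0 u) I) {x y : α} (hx : x ∈ I) (hy : 0 ≤ y)
    (hyx : y ≤ x) : y ∈ I :=
  hI.2.2.1 x hx y ⟨hy, hyx.trans (hI.le_unit hx)⟩ hyx

theorem zero_mem (hI : IsIdealIn u (Set.Icc 0 u) I) : (0 : α) ∈ I :=
  let ⟨_, hx⟩ := hI.2.1
  hI.mem_of_le hx le_rfl (hI.nonneg hx)

theorem unit_nonneg (hI : IsIdealIn u (Set.Icc 0 u) I) : 0 ≤ u :=
  hI.le_unit hI.zero_mem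

theorem oplus_mem (hI : IsIdealIn u (Set.Icc 0 u) I) {x y : α} (hx : x ∈ I) (hy : y ∈ I) :
    oplus u x y ∈ I :=
  hI.2.2.2 x hx y hy

theorem inf_eq_zero_of_inter_eq_singleton (hA : IsIdealIn u (Set.Icc 0 u) A)
    (hB : IsIdealIn u (Set.Icc 0 u) B) (hAB : A ∩ B = {0}) {a b : α} (ha : a ∈ A)
    (hb : b ∈ B) : a ⊓ b = 0 := by
  have hnonneg : 0 ≤ a ⊓ b := le_inf (hA.nonneg ha) (hB.nonneg hb)
  have hmem : a ⊓ b ∈ A ∩ B :=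
    ⟨hA.mem_of_le ha hnonneg inf_le_left, hB.mem_of_le hb hnonneg inf_le_right⟩
  rwa [hAB] at hmem

end IsIdealIn

namespace IsNormalIdealIn

theorem exists_oplus_left_eq (hI : IsNormalIdealIn u (Set.Icc 0 u) I) {x a : α}
    (hx : x ∈ Set.Icc 0 u) (ha : a ∈ I) : ∃ a' ∈ I, oplus u a' x = oplus u x a := by
  rw [← Set.mem_image, ← hI.2 x hx]
  exact Set.mem_image_of_mem _ ha

theorem exists_oplus_right_eq (hI : IsNormalIdealIn u (Set.Icc 0 u) I) {x a : α}
    (hx : x ∈ Set.Icc 0 u) (ha : a ∈ I) : ∃ a' ∈ I, oplus u x a' = oplus u a x := by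
  rw [← Set.mem_image, hI.2 x hx]
  exact Set.mem_image_of_mem _ ha

end IsNormalIdealIn

theorem normalGenIn_subset {C X : Set α} (hI : IsNormalIdealIn u C I) (hXI : X ⊆ I) :
    normalGenIn u C X ⊆ I :=
  Set.sInter_subset_of_mem ⟨hI, hXI⟩

theorem subset_setOplus_left (hB : IsIdealIn u (Set.Icc 0 u) B) (hA : A ⊆ Set.Icc 0 u) :
    A ⊆ setOplus u A B :=
  fun a ha => ⟨a, ha, 0, hB.zero_mem, oplus_zero (hA ha).2⟩

theorem subset_setOplus_right (hA : IsIdealIn u (Set.Icc 0 u) A) (hB : B ⊆ Set.Icc 0 u) :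
    B ⊆ setOplus u A B :=
  fun b hb => ⟨0, hA.zero_mem, b, hb, zero_oplus (hB hb).2⟩

theorem setOplus_subset_Icc [AddLeftMono α] (hA : IsIdealIn u (Set.Icc 0 u) A)
    (hB : IsIdealIn u (Set.Icc 0 u) B) : setOplus u A B ⊆ Set.Icc 0 u := by
  rintro _ ⟨a, ha, b, hb, rfl⟩
  exact oplus_mem_Icc (hA.nonneg ha) (hB.nonneg hb) hA.unit_nonneg

section Mono

variable [AddLeftMono α] [AddRightMono α]

theorem mem_setOplus_of_le (hA : IsIdealIn u (Set.Icc 0 u) A)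
    (hB : IsIdealIn u (Set.Icc 0 u) B) {s y : α} (hs : s ∈ setOplus u A B)
    (hy : y ∈ Set.Icc 0 u) (hys : y ≤ s) : y ∈ setOplus u A B := by
  obtain ⟨a, ha, b, hb, rfl⟩ := hs
  have hb' : -(y ⊓ a) + y ≤ b := neg_inf_add_le (hB.nonneg hb) (hys.trans inf_le_left)
  exact ⟨y ⊓ a, hA.mem_of_le ha (le_inf hy.1 (hA.nonneg ha)) inf_le_right, -(y ⊓ a) + y,
    hB.mem_of_le hb (neg_inf_add_nonneg y a) hb', oplus_inf_neg_inf_add a hy.2⟩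

theorem oplus_mem_setOplus (hA : IsIdealIn u (Set.Icc 0 u) A)
    (hB : IsIdealIn u (Set.Icc 0 u) B) (hAB : ∀ a ∈ A, ∀ b ∈ B, a ⊓ b = 0) {s t : α}
    (hs : s ∈ setOplus u A B) (ht : t ∈ setOplus u A B) : oplus u s t ∈ setOplus u A B := by
  have hst := oplus_mem_Icc (setOplus_subset_Icc hA hB hs).1 (setOplus_subset_Icc hA hB ht).1
    hA.unit_nonneg
  obtain ⟨a₁, ha₁, b₁, hb₁, rfl⟩ := hs
  obtain ⟨a₂, ha₂, b₂, hb₂, rfl⟩ := ht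
  refine mem_setOplus_of_le hA hB ⟨_, hA.oplus_mem ha₁ ha₂, _, hB.oplus_mem hb₁ hb₂, rfl⟩ hst ?_
  exact oplus_oplus_le_oplus_oplus (hA.nonneg ha₁) (hB.nonneg hb₁) (hA.nonneg ha₂)
    (hB.nonneg hb₂) hA.unit_nonneg (add_comm_of_inf_eq_zero (hAB a₂ ha₂ b₁ hb₁)).symm

theorem isIdealIn_setOplus (hA : IsIdealIn u (Set.Icc 0 u) A)
    (hB : IsIdealIn u (Set.Icc 0 u) B) (hAB : ∀ a ∈ A, ∀ b ∈ B, a ⊓ b = 0) :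
    IsIdealIn u (Set.Icc 0 u) (setOplus u A B) :=
  ⟨setOplus_subset_Icc hA hB, ⟨_, 0, hA.zero_mem, 0, hB.zero_mem, rfl⟩,
    fun _ hs _ hy hys => mem_setOplus_of_le hA hB hs hy hys,
    fun _ hs _ ht => oplus_mem_setOplus hA hB hAB hs ht⟩

theorem image_oplus_left_subset (hA : IsNormalIdealIn u (Set.Icc 0 u) A)
    (hB : IsNormalIdealIn u (Set.Icc 0 u) B) {x : α} (hx : x ∈ Set.Icc 0 u) :
    (fun s => oplus u x s) '' setOplus u A B ⊆ (fun s => oplus u s x) '' setOplus u A B := by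
  rintro _ ⟨_, ⟨a, ha, b, hb, rfl⟩, rfl⟩
  obtain ⟨a', ha', hxa⟩ := hA.exists_oplus_left_eq hx ha
  obtain ⟨b', hb', hxb⟩ := hB.exists_oplus_left_eq hx hb
  have ha'0 := hA.1.nonneg ha'
  have hb0 := hB.1.nonneg hb
  refine ⟨oplus u a' b', ⟨a', ha', b', hb', rfl⟩, ?_⟩
  calc oplus u (oplus u a' b') x = oplus u a' (oplus u x b) := by
        rw [oplus_assoc b' ha'0 hx.1, hxb]
    _ = oplus u x (oplus u a b) := by
        rw [← oplus_assoc x ha'0 hb0, hxa, oplus_assoc a hx.1 hb0]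

theorem image_oplus_right_subset (hA : IsNormalIdealIn u (Set.Icc 0 u) A)
    (hB : IsNormalIdealIn u (Set.Icc 0 u) B) {x : α} (hx : x ∈ Set.Icc 0 u) :
    (fun s => oplus u s x) '' setOplus u A B ⊆ (fun s => oplus u x s) '' setOplus u A B := by
  rintro _ ⟨_, ⟨a, ha, b, hb, rfl⟩, rfl⟩
  obtain ⟨a', ha', hxa⟩ := hA.exists_oplus_right_eq hx ha
  obtain ⟨b', hb', hxb⟩ := hB.exists_oplus_right_eq hx hb
  have ha0 := hA.1.nonneg ha
  have hb'0 := hB.1.nonneg hb'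
  refine ⟨oplus u a' b', ⟨a', ha', b', hb', rfl⟩, ?_⟩
  calc oplus u x (oplus u a' b') = oplus u a (oplus u x b') := by
        rw [← oplus_assoc a' hx.1 hb'0, hxa, oplus_assoc x ha0 hb'0]
    _ = oplus u (oplus u a b) x := by
        rw [hxb, oplus_assoc b ha0 hx.1]

theorem isNormalIdealIn_setOplus (hA : IsNormalIdealIn u (Set.Icc 0 u) A)
    (hB : IsNormalIdealIn u (Set.Icc 0 u) B) (hAB : ∀ a ∈ A, ∀ b ∈ B, a ⊓ b = 0) :
    IsNormalIdealIn u (Set.Icc 0 u) (setOplus u A B) :=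
  ⟨isIdealIn_setOplus hA.1 hB.1 hAB, fun _ hx =>
    (image_oplus_left_subset hA hB hx).antisymm (image_oplus_right_subset hA hB hx)⟩

end Mono

theorem eq_polarIn_of_setOplus_eq [AddLeftMono α] (hA : IsIdealIn u (Set.Icc 0 u) A)
    (hB : IsIdealIn u (Set.Icc 0 u) B) (hAB : ∀ a ∈ A, ∀ b ∈ B, a ⊓ b = 0)
    (hsum : setOplus u A B = Set.Icc 0 u) : B = polarIn (Set.Icc 0 u) A := by
  refine Set.Subset.antisymm (fun b hb => ⟨hB.1 hb, fun a ha => inf_comm a b ▸ hAB a ha b hb⟩) ?_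
  rintro y ⟨hy, hyA⟩
  obtain ⟨a, ha, b, hb, rfl⟩ := hsum.symm ▸ hy
  have ha0 : a = 0 := by
    simpa [hyA a ha] using (inf_eq_right.2 (le_oplus_left (hA.le_unit ha) (hB.nonneg hb))).symm
  rwa [ha0, zero_oplus (hB.le_unit hb)]

end Ideals

end LatticeOrderedGroup

theorem stmt2_general (u : G) (A B : Set G)
    (hA : IsNormalIdealIn u (Set.Icc (0 : G) u) A)
    (hB : IsNormalIdealIn u (Set.Icc (0 : G) u) B)
    (hdisj : A ∩ B = {0})
    (hgen : normalGenIn u (Set.Icc (0 : G) u) (A ∪ B) = Set.Icc (0 : G) u) :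
    setOplus u A B = Set.Icc (0 : G) u ∧ B = polarIn (Set.Icc (0 : G) u) A := by
  have hAB : ∀ a ∈ A, ∀ b ∈ B, a ⊓ b = 0 := fun _ ha _ hb =>
    hA.1.inf_eq_zero_of_inter_eq_singleton hB.1 hdisj ha hb
  have hsum : setOplus u A B = Set.Icc 0 u := by
    refine (setOplus_subset_Icc hA.1 hB.1).antisymm ?_
    rw [← hgen]
    exact normalGenIn_subset (isNormalIdealIn_setOplus hA hB hAB)
      (Set.union_subset (subset_setOplus_left hB.1 hA.1.1) (subset_setOplus_right hA.1 hB.1.1))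
  exact ⟨hsum, eq_polarIn_of_setOplus_eq hA.1 hB.1 hAB hsum⟩

theorem stmt2 (u : G) (hu : IsStrongUnit u) (A B : Set G)
    (hA : IsNormalIdealIn u (Set.Icc (0 : G) u) A)
    (hB : IsNormalIdealIn u (Set.Icc (0 : G) u) B)
    (hdisj : A ∩ B = {0})
    (hgen : normalGenIn u (Set.Icc (0 : G) u) (A ∪ B) = Set.Icc (0 : G) u) :
    setOplus u A B = Set.Icc (0 : G) u ∧ B = polarIn (Set.Icc (0 : G) u) A :=
  stmt2_general u A B hA hB hdisj hgen
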